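/- For positive integers m ≥ 2, n ≥ m, let v = max_{0≤x≤1} x^m((1-x)/(1+x))^n and g(r) = r^{m-1}((1+r)/(1-r))^n for 0 < r < 1. Then g(v) < 1. -/

import Mathlib

/-! Bernoulli's inequality gives `((1 - x) / (1 + x)) ^ n ≤ (1 + x) ^ (-2n) ≤ 1 / (1 + 2nx)`,
so every value `x ^ m ((1 - x) / (1 + x)) ^ n ≤ x / (1 + 2nx)` is below `1 / (2n)`, hence
`v ≤ 1 / (2n) ≤ 1 / 4`. Then `v ^ (m - 1) ≤ 1 / 4`, while `(1 + v) / (1 - v) ≤ exp (2v / (1 - v))`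
bounds the second factor by `exp (2nv / (1 - v)) ≤ exp (4 / 3) < 4`. -/

open Real

lemma one_sub_div_one_add_pow_le {x : ℝ} (hx0 : 0 ≤ x) (hx1 : x ≤ 1) (n : ℕ) :
    ((1 - x) / (1 + x)) ^ n ≤ 1 / (1 + 2 * n * x) := by
  have h1x : 0 < 1 + x := by linarith
  have hratio : (1 - x) / (1 + x) ≤ 1 / (1 + x) ^ 2 := by
    rw [div_le_div_iff₀ h1x (by positivity)]
    nlinarith [mul_nonneg (mul_nonneg hx0 hx0) h1x.le]
  have hbernoulli : 1 + 2 * n * x ≤ ((1 + x) ^ 2) ^ n := by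
    rw [← pow_mul]
    exact_mod_cast one_add_mul_le_pow (a := x) (by linarith) (2 * n)
  calc ((1 - x) / (1 + x)) ^ n
      ≤ (1 / (1 + x) ^ 2) ^ n := pow_le_pow_left₀ (div_nonneg (by linarith) h1x.le) hratio n
    _ = 1 / ((1 + x) ^ 2) ^ n := one_div_pow _ n
    _ ≤ 1 / (1 + 2 * n * x) := one_div_le_one_div_of_le (by positivity) hbernoulli

lemma pow_mul_one_sub_div_one_add_pow_le {m n : ℕ} (hm : 1 ≤ m) (hn : 1 ≤ n) {x : ℝ}
    (hx0 : 0 ≤ x) (hx1 : x ≤ 1) :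
    x ^ m * ((1 - x) / (1 + x)) ^ n ≤ 1 / (2 * n) := by
  have hden : 0 < 1 + 2 * n * x := by positivity
  have hn' : (1 : ℝ) ≤ n := by exact_mod_cast hn
  calc x ^ m * ((1 - x) / (1 + x)) ^ n
      ≤ x * (1 / (1 + 2 * n * x)) :=
        mul_le_mul (pow_le_of_le_one hx0 hx1 (by omega)) (one_sub_div_one_add_pow_le hx0 hx1 n)
          (by positivity) hx0
    _ ≤ 1 / (2 * n) := by
        rw [mul_one_div, div_le_div_iff₀ hden (by positivity)]
        linarith

lemma sSup_pow_mul_one_sub_div_one_add_pow_mem_Icc {m n : ℕ} (hm : 1 ≤ m) (hn : 1 ≤ n) :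
    sSup ((fun x : ℝ => x ^ m * ((1 - x) / (1 + x)) ^ n) '' Set.Icc 0 1) ∈
      Set.Icc (0 : ℝ) (1 / (2 * n)) := by
  set S := (fun x : ℝ => x ^ m * ((1 - x) / (1 + x)) ^ n) '' Set.Icc 0 1
  have hzero : (0 : ℝ) ∈ S := ⟨0, by simp, by simp [zero_pow (by omega : m ≠ 0)]⟩
  have hub : ∀ y ∈ S, y ≤ 1 / (2 * n) := by
    rintro y ⟨x, ⟨hx0, hx1⟩, rfl⟩
    exact pow_mul_one_sub_div_one_add_pow_le hm hn hx0 hx1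
  exact ⟨le_csSup ⟨_, hub⟩ hzero, csSup_le ⟨0, hzero⟩ hub⟩

lemma one_add_div_one_sub_pow_le_exp {v : ℝ} (hv0 : 0 ≤ v) (hv1 : v < 1) (n : ℕ) :
    ((1 + v) / (1 - v)) ^ n ≤ exp (n * (2 * v / (1 - v))) := by
  have hratio : (1 + v) / (1 - v) = 2 * v / (1 - v) + 1 := by
    field_simp [(by linarith : 1 - v ≠ 0)]
    ring
  rw [exp_nat_mul]
  exact pow_le_pow_left₀ (div_nonneg (by linarith) (by linarith))
    (hratio ▸ add_one_le_exp _) n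

lemma exp_four_div_three_lt_four : exp (4 / 3) < 4 := by
  have hlog : log 4 = 2 * log 2 := by
    rw [show (4 : ℝ) = 2 ^ 2 by norm_num, log_pow, Nat.cast_ofNat]
  rw [← lt_log_iff_exp_lt (by norm_num), hlog]
  linarith [log_two_gt_d9]

lemma one_add_div_one_sub_pow_lt_four {v : ℝ} {n : ℕ} (hv0 : 0 ≤ v) (hv : v ≤ 1 / 4)
    (hnv : 2 * n * v ≤ 1) : ((1 + v) / (1 - v)) ^ n < 4 := by
  have hexponent : n * (2 * v / (1 - v)) ≤ 4 / 3 := by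
    rw [mul_div_assoc', div_le_iff₀ (by linarith)]
    linarith
  calc ((1 + v) / (1 - v)) ^ n
      ≤ exp (n * (2 * v / (1 - v))) := one_add_div_one_sub_pow_le_exp hv0 (by linarith) n
    _ ≤ exp (4 / 3) := exp_le_exp.mpr hexponent
    _ < 4 := exp_four_div_three_lt_four

/-- For integers m ≥ 2, n ≥ m, with v = max_{0≤x≤1} x^m((1-x)/(1+x))^n and
g(r) = r^(m-1)((1+r)/(1-r))^n, one has g(v) < 1. -/
theorem g_of_v_lt_one (m n : ℕ) (hm : 2 ≤ m) (hmn : m ≤ n)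
    (v : ℝ)
    (hv : v = sSup ((fun x : ℝ => x ^ m * ((1 - x) / (1 + x)) ^ n) '' Set.Icc 0 1)) :
    v ^ (m - 1) * ((1 + v) / (1 - v)) ^ n < 1 := by
  obtain ⟨hv0, hv_le⟩ : v ∈ Set.Icc (0 : ℝ) (1 / (2 * n)) :=
    hv ▸ sSup_pow_mul_one_sub_div_one_add_pow_mem_Icc (by omega) (by omega)
  have hn : (2 : ℝ) ≤ n := by exact_mod_cast hm.trans hmn
  have hnv : 2 * n * v ≤ 1 := by rwa [le_div_iff₀' (by linarith)] at hv_le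
  have hv4 : v ≤ 1 / 4 := by nlinarith
  have hfirst : v ^ (m - 1) ≤ 1 / 4 :=
    (pow_le_of_le_one hv0 (by linarith) (by omega)).trans hv4
  calc v ^ (m - 1) * ((1 + v) / (1 - v)) ^ n
      ≤ 1 / 4 * ((1 + v) / (1 - v)) ^ n :=
        mul_le_mul_of_nonneg_right hfirst (pow_nonneg (div_nonneg (by linarith) (by linarith)) n)
    _ < 1 / 4 * 4 :=
        mul_lt_mul_of_pos_left (one_add_div_one_sub_pow_lt_four hv0 hv4 hnv) (by norm_num)
    _ = 1 := by norm_num
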